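/- arXiv:1906.10431 — 4 statements merged into one kernel-verified Lean document; each statement's English description precedes it below -/
import Mathlib

section
/- Let (w_s)_{s∈ℕ} be vectors in the K-simplex with w_1,…,w_K equal to the K standard basis vectors. Define recursively N_K^k = 1 for all k, and for t ≥ K+1, k_t = argmin_k N_{t-1}^k / Σ_{s=1}^t w_s^k, with N_t^k = Σ_{s=1}^t 𝟙{k_s = k}. Then for all t ≥ K and all k ∈ [K], we have Σ_{s=1}^t w_s^k − (K−1) ≤ N_t^k ≤ Σ_{s=1}^t w_s^k + 1. -/
/-- Tracking lemma: with `w s ∈ Δ_K`, first `K` plays the basis vectors, and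
`k_t = argmin_k N_{t-1}^k / Σ_{s=1}^t w_s^k`, the counts satisfy
`Σ_{s=1}^t w_s^k − (K−1) ≤ N_t^k ≤ Σ_{s=1}^t w_s^k + 1` for all `t ≥ K`. -/
theorem tracking_sandwich (K : ℕ) (hK : 1 ≤ K)
    (w : ℕ → Fin K → ℝ) (ksel : ℕ → Fin K)
    (N : ℕ → Fin K → ℕ)
    (hN : ∀ t k, N t k = ((Finset.Icc 1 t).filter (fun s => ksel s = k)).card)
    (hw_nonneg : ∀ s k, 0 ≤ w s k)
    (hw_sum : ∀ s, ∑ k, w s k = 1)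
    (hw_basis : ∀ s, 1 ≤ s → s ≤ K → ∀ k, w s k = if (k : ℕ) + 1 = s then 1 else 0)
    (hinit : ∀ s, 1 ≤ s → s ≤ K → (ksel s : ℕ) + 1 = s)
    (hargmin : ∀ t, K < t → ∀ j : Fin K,
      (N (t - 1) (ksel t) : ℝ) / ∑ s ∈ Finset.Icc 1 t, w s (ksel t)
        ≤ (N (t - 1) j : ℝ) / ∑ s ∈ Finset.Icc 1 t, w s j) :
    ∀ t, K ≤ t → ∀ k : Fin K,
      (∑ s ∈ Finset.Icc 1 t, w s k) - (K - 1) ≤ (N t k : ℝ) ∧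
      (N t k : ℝ) ≤ (∑ s ∈ Finset.Icc 1 t, w s k) + 1 := by
  set W : ℕ → Fin K → ℝ := fun t k => ∑ s ∈ Finset.Icc 1 t, w s k with hWdef
  -- sum of W over k
  have hWsum : ∀ t, ∑ k, W t k = t := by
    intro t
    simp only [hWdef]
    rw [Finset.sum_comm]
    simp [hw_sum, Nat.card_Icc]
  have hNsum : ∀ t, ∑ k, N t k = t := by
    intro t
    simp only [hN, Finset.card_filter]
    rw [Finset.sum_comm]
    simp [Finset.sum_ite_eq, Nat.card_Icc]
  have hWmono : ∀ k t t', t ≤ t' → W t k ≤ W t' k := by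
    intro k t t' h
    apply Finset.sum_le_sum_of_subset_of_nonneg
    · exact Finset.Icc_subset_Icc_right h
    · intro s _ _; exact hw_nonneg s k
  have hWK : ∀ k : Fin K, W K k = 1 := by
    intro k
    have : W K k = ∑ s ∈ Finset.Icc 1 K, (if (k : ℕ) + 1 = s then (1:ℝ) else 0) := by
      apply Finset.sum_congr rfl
      intro s hs
      rw [Finset.mem_Icc] at hs
      exact hw_basis s hs.1 hs.2 k
    rw [this, Finset.sum_ite_eq]
    have hk : (k : ℕ) + 1 ∈ Finset.Icc 1 K := by
      rw [Finset.mem_Icc]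
      exact ⟨Nat.le_add_left 1 k, k.isLt⟩
    simp [hk]
  have hWpos : ∀ t, K ≤ t → ∀ k, (1:ℝ) ≤ W t k := by
    intro t ht k
    calc (1:ℝ) = W K k := (hWK k).symm
    _ ≤ W t k := hWmono k K t ht
  have hNK : ∀ k : Fin K, N K k = 1 := by
    intro k
    rw [hN]
    have : (Finset.Icc 1 K).filter (fun s => ksel s = k) = {(k : ℕ) + 1} := by
      ext s
      simp only [Finset.mem_filter, Finset.mem_Icc, Finset.mem_singleton]
      constructor
      · rintro ⟨⟨h1, h2⟩, h3⟩
        rw [← hinit s h1 h2, h3]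
      · rintro rfl
        have h1 : 1 ≤ (k:ℕ) + 1 := Nat.le_add_left 1 k
        have h2 : (k:ℕ) + 1 ≤ K := k.isLt
        refine ⟨⟨h1, h2⟩, ?_⟩
        have := hinit ((k:ℕ)+1) h1 h2
        exact Fin.ext (by omega)
    rw [this, Finset.card_singleton]
  have hNstep : ∀ t k, N (t + 1) k = N t k + if ksel (t + 1) = k then 1 else 0 := by
    intro t k
    simp only [hN, Finset.card_filter]
    rw [Finset.sum_Icc_succ_top (by omega : 1 ≤ t + 1)]
  -- main upper-bound induction
  have upper : ∀ t, K ≤ t → ∀ k, (N t k : ℝ) ≤ W t k + 1 := by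
    intro t ht
    induction t, ht using Nat.le_induction with
    | base => intro k; rw [hNK k, hWK k]; norm_num
    | succ t ht ih =>
      intro k
      by_cases hc : ksel (t + 1) = k
      · -- k is the argmin; show N t k ≤ W (t+1) k
        subst hc
        rw [hNstep]
        simp only [if_pos rfl]
        have key : (N t (ksel (t+1)) : ℝ) < W (t+1) (ksel (t+1)) := by
          -- find j with N t j < W (t+1) j
          have hex : ∃ j : Fin K, (N t j : ℝ) < W (t+1) j := by
            by_contra hno
            push_neg at hno
            have : ∑ j, W (t+1) j ≤ ∑ j, (N t j : ℝ) := Finset.sum_le_sum fun j _ => hno j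
            rw [hWsum] at this
            have : ((t:ℝ) + 1) ≤ ∑ j, (N t j : ℝ) := by push_cast at this ⊢; linarith
            have h2 : ∑ j, (N t j : ℝ) = t := by
              rw [← Nat.cast_sum, hNsum]
            linarith
          obtain ⟨j, hj⟩ := hex
          have hWjpos : (0:ℝ) < W (t+1) j := lt_of_lt_of_le one_pos (hWpos (t+1) (by omega) j)
          have hWcpos : (0:ℝ) < W (t+1) (ksel (t+1)) :=
            lt_of_lt_of_le one_pos (hWpos (t+1) (by omega) (ksel (t+1)))
          have harg := hargmin (t+1) (by omega) j
          simp only [Nat.add_sub_cancel] at harg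
          have hj1 : (N t j : ℝ) / W (t+1) j < 1 := by
            rw [div_lt_one hWjpos]; exact hj
          have hc1 : (N t (ksel (t+1)) : ℝ) / W (t+1) (ksel (t+1)) < 1 :=
            lt_of_le_of_lt harg hj1
          rw [div_lt_one hWcpos] at hc1
          exact hc1
        push_cast
        linarith
      · rw [hNstep, if_neg hc]
        simp only [Nat.add_zero]
        calc (N t k : ℝ) ≤ W t k + 1 := ih k
        _ ≤ W (t+1) k + 1 := by linarith [hWmono k t (t+1) (by omega)]
  -- conclude
  intro t ht k
  refine ⟨?_, upper t ht k⟩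
  -- lower bound from upper bounds on other coordinates
  have hNk : (N t k : ℝ) = t - ∑ j ∈ Finset.univ.erase k, (N t j : ℝ) := by
    have := Finset.add_sum_erase Finset.univ (fun j => (N t j : ℝ)) (Finset.mem_univ k)
    have hs : ∑ j, (N t j : ℝ) = t := by rw [← Nat.cast_sum, hNsum]
    linarith [this, hs]
  have hWk : ∑ j ∈ Finset.univ.erase k, W t j = t - W t k := by
    have := Finset.add_sum_erase Finset.univ (fun j => W t j) (Finset.mem_univ k)
    have hs := hWsum t
    linarith [this, hs]
  have hbound : ∑ j ∈ Finset.univ.erase k, (N t j : ℝ) ≤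
      ∑ j ∈ Finset.univ.erase k, (W t j + 1) := by
    apply Finset.sum_le_sum
    intro j _
    exact upper t ht j
  have hcard : ((Finset.univ.erase k).card : ℝ) = K - 1 := by
    rw [Finset.card_erase_of_mem (Finset.mem_univ k)]
    simp [Fintype.card_fin]
    push_cast [Nat.cast_sub hK]
    ring
  rw [Finset.sum_add_distrib, Finset.sum_const, nsmul_eq_mul] at hbound
  rw [hWk] at hbound
  rw [hNk]
  rw [hcard] at hbound
  linarith
end

section
/- Let N_t^k be the tracking counts defined from simplex vectors (w_s) by the tracking rule (so that Σ_{s=1}^t w_s^k − (K−1) ≤ N_t^k ≤ Σ_{s=1}^t w_s^k + 1 for all t ≥ K). Then Σ_{k=1}^K Σ_{s=K}^t w_s^k / √(N_s^k) ≤ K² + 2√(Kt). -/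
private lemma sqrt_aux {A b : ℝ} (hb : 0 ≤ b) (hbA : b ≤ A) :
    b / Real.sqrt A ≤ 2 * (Real.sqrt A - Real.sqrt (A - b)) := by
  rcases eq_or_lt_of_le (hb.trans hbA) with h | hA
  · have hb0 : b = 0 := le_antisymm (hbA.trans h.symm.le) hb
    simp [← h, hb0]
  · have hs : 0 < Real.sqrt A := Real.sqrt_pos.2 hA
    rw [div_le_iff₀ hs]
    have h1 : Real.sqrt A ^ 2 = A := Real.sq_sqrt hA.le
    have h2 : Real.sqrt (A - b) ^ 2 = A - b := Real.sq_sqrt (by linarith)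
    have h3 : 0 ≤ Real.sqrt (A - b) := Real.sqrt_nonneg _
    nlinarith [sq_nonneg (Real.sqrt A - Real.sqrt (A - b))]

private lemma tel (f : ℕ → ℝ) (a : ℕ) :
    ∀ t, a ≤ t → ∑ s ∈ Finset.Icc a t, (f s - f (s - 1)) = f t - f (a - 1) := by
  intro t
  induction t with
  | zero =>
      intro h
      have : a = 0 := Nat.le_zero.1 h
      subst this; simp
  | succ n ih =>
      intro h
      rcases Nat.lt_or_ge n a with h1 | h1
      · have : a = n + 1 := le_antisymm h h1
        subst this; simp
      · rw [Finset.sum_Icc_succ_top (by omega : a ≤ n + 1), ih h1]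
        simp only [Nat.add_sub_cancel]
        ring

private lemma key (K t : ℕ) (hK : 1 ≤ K) (ht : K ≤ t) (b : ℕ → ℝ)
    (hb0 : ∀ s, 0 ≤ b s) (hb1 : ∀ s, b s ≤ 1) (d : ℕ → ℕ)
    (hd1 : ∀ s, K ≤ s → 1 ≤ d s)
    (hd2 : ∀ s, K ≤ s → (∑ u ∈ Finset.Icc 1 s, b u) - ((K : ℝ) - 1) ≤ d s) :
    ∑ s ∈ Finset.Icc K t, b s / Real.sqrt (d s)
      ≤ K + 2 * Real.sqrt (∑ u ∈ Finset.Icc 1 t, b u) := by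
  set B : ℕ → ℝ := fun s => ∑ u ∈ Finset.Icc 1 s, b u with hB
  set φ : ℕ → ℝ := fun s => Real.sqrt (max 0 (B s - ((K : ℝ) - 1))) with hφ
  have hBmono : ∀ s₁ s₂ : ℕ, s₁ ≤ s₂ → B s₁ ≤ B s₂ := fun s₁ s₂ h =>
    Finset.sum_le_sum_of_subset_of_nonneg
      (Finset.Icc_subset_Icc_right h) (fun i _ _ => hb0 i)
  have hBnn : ∀ s, 0 ≤ B s := fun s => Finset.sum_nonneg fun i _ => hb0 i
  have hBsucc : ∀ s : ℕ, 1 ≤ s → B s = B (s - 1) + b s := by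
    intro s hs
    obtain ⟨m, rfl⟩ := Nat.exists_eq_add_of_le' hs
    rw [hB]
    simp only [Nat.add_sub_cancel]
    rw [Finset.sum_Icc_succ_top (by omega : 1 ≤ m + 1)]
  have hφmono : ∀ s₁ s₂ : ℕ, s₁ ≤ s₂ → φ s₁ ≤ φ s₂ := by
    intro s₁ s₂ h
    exact Real.sqrt_le_sqrt (max_le_max le_rfl (by linarith [hBmono s₁ s₂ h]))
  have hstep : ∀ s ∈ Finset.Icc K t,
      b s / Real.sqrt (d s) ≤ (if B s ≤ K then b s else 0) + 2 * (φ s - φ (s - 1)) := by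
    intro s hs
    rw [Finset.mem_Icc] at hs
    have hsK : K ≤ s := hs.1
    have hd1' : (1 : ℝ) ≤ d s := by exact_mod_cast hd1 s hsK
    by_cases hc : B s ≤ K
    · rw [if_pos hc]
      have h1 : b s / Real.sqrt (d s) ≤ b s := by
        rw [div_le_iff₀ (by positivity)]
        nlinarith [Real.sqrt_le_sqrt hd1', Real.sqrt_one, hb0 s]
      have h2 : 0 ≤ φ s - φ (s - 1) := sub_nonneg.2 (hφmono _ _ (Nat.sub_le s 1))
      linarith
    · rw [if_neg hc]
      push_neg at hc
      have hA : (1 : ℝ) < B s - ((K : ℝ) - 1) := by linarith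
      have hprev : 0 ≤ B (s - 1) - ((K : ℝ) - 1) := by
        have := hBsucc s (le_trans hK hsK)
        have := hb1 s
        linarith
      have hφs : φ s = Real.sqrt (B s - ((K : ℝ) - 1)) := by
        rw [hφ]; simp [max_eq_right (by linarith : (0:ℝ) ≤ B s - ((K:ℝ)-1))]
      have hφs' : φ (s - 1) = Real.sqrt (B (s - 1) - ((K : ℝ) - 1)) := by
        rw [hφ]; simp [max_eq_right hprev]
      have hdA : B s - ((K : ℝ) - 1) ≤ d s := hd2 s hsK
      have h1 : b s / Real.sqrt (d s) ≤ b s / Real.sqrt (B s - ((K : ℝ) - 1)) := by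
        apply div_le_div_of_nonneg_left (hb0 s) (Real.sqrt_pos.2 (by linarith))
        exact Real.sqrt_le_sqrt hdA
      have h2 : b s / Real.sqrt (B s - ((K : ℝ) - 1))
          ≤ 2 * (Real.sqrt (B s - ((K : ℝ) - 1)) - Real.sqrt (B s - ((K : ℝ) - 1) - b s)) :=
        sqrt_aux (hb0 s) (by linarith [hb1 s])
      have h3 : B s - ((K : ℝ) - 1) - b s = B (s - 1) - ((K : ℝ) - 1) := by
        have := hBsucc s (le_trans hK hsK); linarith
      rw [h3] at h2
      rw [hφs, hφs']
      linarith
  calc ∑ s ∈ Finset.Icc K t, b s / Real.sqrt (d s)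
      ≤ ∑ s ∈ Finset.Icc K t, ((if B s ≤ K then b s else 0) + 2 * (φ s - φ (s - 1))) :=
        Finset.sum_le_sum hstep
    _ = (∑ s ∈ Finset.Icc K t, if B s ≤ K then b s else 0)
          + 2 * ∑ s ∈ Finset.Icc K t, (φ s - φ (s - 1)) := by
        rw [Finset.sum_add_distrib, Finset.mul_sum]
    _ ≤ K + 2 * Real.sqrt (B t) := by
        have hpart1 : (∑ s ∈ Finset.Icc K t, if B s ≤ K then b s else 0) ≤ K := by
          rw [← Finset.sum_filter]
          rcases Finset.eq_empty_or_nonempty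
            ((Finset.Icc K t).filter (fun s => B s ≤ (K : ℝ))) with h | h
          · rw [h]; simp
          · have hm := Finset.max'_mem _ h
            rw [Finset.mem_filter, Finset.mem_Icc] at hm
            calc ∑ s ∈ (Finset.Icc K t).filter (fun s => B s ≤ (K : ℝ)), b s
                ≤ ∑ s ∈ Finset.Icc 1
                    (((Finset.Icc K t).filter (fun s => B s ≤ (K : ℝ))).max' h), b s := by
                  apply Finset.sum_le_sum_of_subset_of_nonneg _ (fun i _ _ => hb0 i)
                  intro x hx
                  have hx' := Finset.le_max' _ x hx
                  rw [Finset.mem_filter, Finset.mem_Icc] at hx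
                  exact Finset.mem_Icc.2 ⟨by omega, hx'⟩
              _ ≤ K := hm.2
        have hpart2 : ∑ s ∈ Finset.Icc K t, (φ s - φ (s - 1)) ≤ Real.sqrt (B t) := by
          rw [tel φ K t ht]
          have h1 : φ t ≤ Real.sqrt (B t) := by
            apply Real.sqrt_le_sqrt
            have hK' : (1 : ℝ) ≤ K := by exact_mod_cast hK
            exact max_le (hBnn t) (by linarith)
          have h2 : 0 ≤ φ (K - 1) := Real.sqrt_nonneg _
          linarith
        linarith

/-- Under the tracking rule (with counts satisfying the tracking sandwich
`Σ_{s=1}^t w_s^k − (K−1) ≤ N_t^k ≤ Σ_{s=1}^t w_s^k + 1` for `t ≥ K`),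
`Σ_{k=1}^K Σ_{s=K}^t w_s^k / √(N_s^k) ≤ K² + 2√(Kt)`. -/
theorem tracking_sum_w_div_sqrt_N (K : ℕ) (hK : 1 ≤ K)
    (w : ℕ → Fin K → ℝ) (ksel : ℕ → Fin K)
    (N : ℕ → Fin K → ℕ)
    (hN : ∀ t k, N t k = ((Finset.Icc 1 t).filter (fun s => ksel s = k)).card)
    (hw_nonneg : ∀ s k, 0 ≤ w s k)
    (hw_sum : ∀ s, ∑ k, w s k = 1)
    (hw_basis : ∀ s, 1 ≤ s → s ≤ K → ∀ k, w s k = if (k : ℕ) + 1 = s then 1 else 0)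
    (hinit : ∀ s, 1 ≤ s → s ≤ K → (ksel s : ℕ) + 1 = s)
    (htrack : ∀ t, K ≤ t → ∀ k : Fin K,
      (∑ s ∈ Finset.Icc 1 t, w s k) - (K - 1) ≤ (N t k : ℝ) ∧
      (N t k : ℝ) ≤ (∑ s ∈ Finset.Icc 1 t, w s k) + 1)
    (t : ℕ) (ht : K ≤ t) :
    ∑ k : Fin K, ∑ s ∈ Finset.Icc K t, w s k / Real.sqrt (N s k)
      ≤ (K : ℝ) ^ 2 + 2 * Real.sqrt (K * t) := by
  have hw1 : ∀ s k, w s k ≤ 1 := by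
    intro s k
    calc w s k ≤ ∑ j, w s j :=
          Finset.single_le_sum (fun j _ => hw_nonneg s j) (Finset.mem_univ k)
      _ = 1 := hw_sum s
  have hperk : ∀ k : Fin K,
      ∑ s ∈ Finset.Icc K t, w s k / Real.sqrt (N s k)
        ≤ K + 2 * Real.sqrt (∑ u ∈ Finset.Icc 1 t, w u k) := by
    intro k
    apply key K t hK ht (fun s => w s k) (fun s => hw_nonneg s k) (fun s => hw1 s k)
      (fun s => N s k)
    · intro s hs
      rw [hN s k]
      apply Finset.card_pos.2
      refine ⟨(k : ℕ) + 1, Finset.mem_filter.2 ⟨Finset.mem_Icc.2 ⟨by omega, ?_⟩, ?_⟩⟩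
      · have := k.2; omega
      · have h := hinit ((k : ℕ) + 1) (by omega) (by have := k.2; omega)
        exact Fin.ext (by omega)
    · intro s hs
      exact (htrack s hs k).1
  have hBsum : ∑ k : Fin K, ∑ u ∈ Finset.Icc 1 t, w u k = t := by
    rw [Finset.sum_comm]
    rw [Finset.sum_congr rfl (fun u _ => hw_sum u)]
    simp
  have hcauchy : ∑ k : Fin K, Real.sqrt (∑ u ∈ Finset.Icc 1 t, w u k)
      ≤ Real.sqrt ((K : ℝ) * t) := by
    have h := Finset.sum_mul_sq_le_sq_mul_sq Finset.univ (fun _ : Fin K => (1 : ℝ))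
      (fun k => Real.sqrt (∑ u ∈ Finset.Icc 1 t, w u k))
    simp only [one_mul, one_pow] at h
    have hKt : ∑ k : Fin K, Real.sqrt (∑ u ∈ Finset.Icc 1 t, w u k) ^ 2 = (t : ℝ) := by
      rw [← hBsum]
      apply Finset.sum_congr rfl
      intro k _
      exact Real.sq_sqrt (Finset.sum_nonneg fun i _ => hw_nonneg i k)
    rw [hKt] at h
    simp at h
    have hnn : 0 ≤ ∑ k : Fin K, Real.sqrt (∑ u ∈ Finset.Icc 1 t, w u k) :=
      Finset.sum_nonneg fun k _ => Real.sqrt_nonneg _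
    rw [show ((K : ℝ) * t) = ((Finset.univ : Finset (Fin K)).card : ℝ) * t by simp]
    exact (Real.le_sqrt hnn (by positivity)).2 (by simpa using h)
  calc ∑ k : Fin K, ∑ s ∈ Finset.Icc K t, w s k / Real.sqrt (N s k)
      ≤ ∑ k : Fin K, ((K : ℝ) + 2 * Real.sqrt (∑ u ∈ Finset.Icc 1 t, w u k)) :=
        Finset.sum_le_sum fun k _ => hperk k
    _ = (K : ℝ) * K + 2 * ∑ k : Fin K, Real.sqrt (∑ u ∈ Finset.Icc 1 t, w u k) := by
        rw [Finset.sum_add_distrib, Finset.mul_sum, Finset.sum_const, Finset.card_univ,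
          Fintype.card_fin, nsmul_eq_mul]
    _ ≤ (K : ℝ) ^ 2 + 2 * Real.sqrt ((K : ℝ) * t) := by nlinarith [hcauchy]
end

section
/- Suppose a real t ≥ 1 satisfies t − C√(t log t) ≤ T* where T* = log(1/δ)/D > 1 and C > 0 with C(1 + log T*)/(2√(T* log T*)) < 1. Then t ≤ T* · (1 + C√(log(T*)/T*) · 1/(1 − C(1 + log T*)/(2√(T* log T*)))). -/
open Real

/-- If `t ≥ 1` satisfies `t − C√(t log t) ≤ T*` where `T* = log(1/δ)/D > 1`
and `C(1 + log T*)/(2√(T* log T*)) < 1`, then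
`t ≤ T*(1 + C√(log T*/T*) / (1 − C(1 + log T*)/(2√(T* log T*))))`. -/
theorem solve_stopping_inequality (δ D C t : ℝ)
    (hδ : 0 < δ) (hδ1 : δ < 1) (hD : 0 < D) (hC : 0 < C) (ht1 : 1 ≤ t)
    (hT : 1 < Real.log (1 / δ) / D)
    (hCsmall : C * (1 + Real.log (Real.log (1 / δ) / D))
        / (2 * Real.sqrt ((Real.log (1 / δ) / D) * Real.log (Real.log (1 / δ) / D))) < 1)
    (hineq : t - C * Real.sqrt (t * Real.log t) ≤ Real.log (1 / δ) / D) :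
    t ≤ (Real.log (1 / δ) / D) *
      (1 + C * Real.sqrt (Real.log (Real.log (1 / δ) / D) / (Real.log (1 / δ) / D))
        * (1 / (1 - C * (1 + Real.log (Real.log (1 / δ) / D))
          / (2 * Real.sqrt ((Real.log (1 / δ) / D) * Real.log (Real.log (1 / δ) / D)))))) := by
  set T := Real.log (1 / δ) / D with hTdef
  have hT0 : (0:ℝ) < T := lt_trans one_pos hT
  have hlT0 : 0 < Real.log T := Real.log_pos hT
  set lT := Real.log T with hlTdef
  have hTlT : 0 < T * lT := mul_pos hT0 hlT0
  have hL0 : 0 < Real.sqrt (T * lT) := Real.sqrt_pos.2 hTlT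
  set L := Real.sqrt (T * lT) with hLdef
  have hLsq : L ^ 2 = T * lT := Real.sq_sqrt hTlT.le
  clear_value T lT L
  have hsub : 0 < 1 - C * (1 + lT) / (2 * L) := by linarith
  have hsq0 : 0 ≤ Real.sqrt (lT / T) := Real.sqrt_nonneg _
  have hLT : T * Real.sqrt (lT / T) = L := by
    rw [hLdef, Real.sqrt_div hlT0.le, Real.sqrt_mul hT0.le]
    have hsT : Real.sqrt T * Real.sqrt T = T := Real.mul_self_sqrt hT0.le
    have hsT0 : 0 < Real.sqrt T := Real.sqrt_pos.2 hT0
    field_simp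
    nlinarith [Real.sqrt_nonneg lT]
  rcases le_or_gt t T with hcase | hcase
  · have h1 : 0 ≤ C * Real.sqrt (lT / T) * (1 / (1 - C * (1 + lT) / (2 * L))) := by positivity
    nlinarith
  · -- key concavity bound
    have hlog : Real.log t ≤ lT + (t - T) / T := by
      have h1 : Real.log t - lT = Real.log (t / T) := by
        rw [hlTdef, ← Real.log_div (by linarith) (ne_of_gt hT0)]
      have h2 : Real.log (t / T) ≤ t / T - 1 :=
        Real.log_le_sub_one_of_pos (by positivity)
      have h3 : t / T - 1 = (t - T) / T := by field_simp
      linarith [h1 ▸ h2, h3 ▸ h2]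
    have hu0 : 0 ≤ t - T := le_of_lt (by linarith)
    have hB : L + (t - T) * (1 + lT) / (2 * L) ≥ 0 := by positivity
    have hkey : Real.sqrt (t * Real.log t) ≤ L + (t - T) * (1 + lT) / (2 * L) := by
      have hsq : t * Real.log t ≤ (L + (t - T) * (1 + lT) / (2 * L)) ^ 2 := by
        have hexp : (L + (t - T) * (1 + lT) / (2 * L)) ^ 2
            = T * lT + (t - T) * (1 + lT) + (t - T) ^ 2 * (1 + lT) ^ 2 / (4 * (T * lT)) := by
          rw [← hLsq]
          field_simp
          ring
        rw [hexp]
        have h4 : (t - T) ^ 2 / T ≤ (t - T) ^ 2 * (1 + lT) ^ 2 / (4 * (T * lT)) := by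
          rw [div_le_div_iff₀ hT0 (by positivity)]
          nlinarith [mul_nonneg (mul_nonneg (sq_nonneg (t - T)) hT0.le) (sq_nonneg (1 - lT))]
        have h5 : t * Real.log t ≤ T * lT + (t - T) * (1 + lT) + (t - T) ^ 2 / T := by
          have h6 : t * Real.log t ≤ t * (lT + (t - T) / T) := by
            nlinarith
          have h7 : t * (lT + (t - T) / T)
              = T * lT + (t - T) * (1 + lT) + (t - T) ^ 2 / T := by
            field_simp
            ring
          linarith
        linarith
      calc Real.sqrt (t * Real.log t)
          ≤ Real.sqrt ((L + (t - T) * (1 + lT) / (2 * L)) ^ 2) := Real.sqrt_le_sqrt hsq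
        _ = L + (t - T) * (1 + lT) / (2 * L) := Real.sqrt_sq hB
    -- combine
    have h8 : t - T ≤ C * L + (t - T) * (C * (1 + lT) / (2 * L)) := by
      have hmul : C * Real.sqrt (t * Real.log t) ≤ C * (L + (t - T) * (1 + lT) / (2 * L)) :=
        mul_le_mul_of_nonneg_left hkey hC.le
      have hrw : C * (L + (t - T) * (1 + lT) / (2 * L))
          = C * L + (t - T) * (C * (1 + lT) / (2 * L)) := by ring
      linarith
    have h9 : t - T ≤ C * L / (1 - C * (1 + lT) / (2 * L)) := by
      rw [le_div_iff₀ hsub]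
      calc (t - T) * (1 - C * (1 + lT) / (2 * L))
          = (t - T) - (t - T) * (C * (1 + lT) / (2 * L)) := by ring
        _ ≤ C * L := by linarith
    have hgoal : T * (1 + C * Real.sqrt (lT / T) * (1 / (1 - C * (1 + lT) / (2 * L))))
        = T + C * L / (1 - C * (1 + lT) / (2 * L)) := by
      rw [← hLT]
      ring
    rw [hgoal]
    linarith
end

section
/- For x > 1, define Ŵ(x) = x + log x, and let W̄(x) = −W_{−1}(−e^{−x}) where W_{−1} is the negative branch of the Lambert W function (equivalently W̄(x) is the unique solution y ≥ 1 of y − log y = x for x ≥ 1). Then for x > 1, Ŵ(x) ≤ W̄(x) ≤ Ŵ(x) + min{1/2, 1/√x}. -/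
/-!
Put `y = W̄(x)`, so that `y = x + log y`. Since `log y ≥ 0` we get `y ≥ x`, hence
`y ≥ x + log x`. For the upper bound it suffices that `y ≤ x e^c`, i.e. `log y ≤ log x + c`;
as `t ↦ t - log t` is increasing on `[1, ∞)`, this follows from `x ≤ x e^c - log x - c`.
That inequality holds for `c = 1/2` and every `x > 0` by the tangent line of `log` at
`√e` and `e - √e ≥ 1`, and for `c = 1/√x` once `x ≥ 4` by `e^c ≥ 1 + c + c²/2`; for `x ≤ 4` the
minimum is `1/2`.
-/

open Real Set

lemma strictMonoOn_sub_log : StrictMonoOn (fun t : ℝ => t - log t) (Ici 1) := by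
  intro a (ha : 1 ≤ a) b _ hab
  have ha0 : 0 < a := by linarith
  have hb0 : 0 < b := by linarith
  have hlog : log (b / a) < b / a - 1 :=
    log_lt_sub_one_of_pos (by positivity) (by rw [Ne, div_eq_one_iff_eq ha0.ne']; exact hab.ne')
  have hdiv : b / a - 1 ≤ b - a := by
    rw [div_sub_one ha0.ne', div_le_iff₀ ha0]
    nlinarith
  rw [log_div hb0.ne' ha0.ne'] at hlog
  show a - log a < b - log b
  linarith

lemma add_log_le_of_sub_log_eq {x y : ℝ} (hx : 0 < x) (hy : 1 ≤ y) (h : y - log y = x) :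
    x + log x ≤ y := by
  have hxy : x ≤ y := by linarith [log_nonneg hy]
  linarith [log_le_log hx hxy]

lemma le_add_log_add_of_sub_log_eq {x y c : ℝ} (hx : 1 ≤ x) (hy : 1 ≤ y) (h : y - log y = x)
    (hc : 0 ≤ c) (hkey : log x + c ≤ x * (exp c - 1)) : y ≤ x + log x + c := by
  have hlog_mul : log (x * exp c) = log x + c := by
    rw [log_mul (by positivity) (exp_ne_zero c), log_exp]
  have hz : (1 : ℝ) ≤ x * exp c := one_le_mul_of_one_le_of_one_le hx (one_le_exp hc)
  have hyz : y ≤ x * exp c := by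
    rw [← strictMonoOn_sub_log.le_iff_le hy hz]
    simp only [hlog_mul]
    linarith
  linarith [log_le_log (by linarith) hyz]

lemma log_add_half_le {x : ℝ} (hx : 0 < x) : log x + 1 / 2 ≤ x * (exp (1 / 2) - 1) := by
  set E := exp (1 / 2)
  have hE : E ^ 2 = exp 1 := by rw [← exp_nat_mul]; norm_num
  have htangent : log x + 1 / 2 ≤ x / E := by
    have := add_one_le_exp (log x - 1 / 2)
    rw [exp_sub, exp_log hx] at this
    linarith
  have hE_inv : 1 / E ≤ E - 1 := by
    have hE_pos : 0 < E := exp_pos _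
    rw [div_le_iff₀ hE_pos]
    nlinarith [exp_one_gt_d9]
  calc log x + 1 / 2 ≤ x / E := htangent
    _ = x * (1 / E) := by ring
    _ ≤ x * (E - 1) := by gcongr

lemma two_mul_log_le_self {s : ℝ} (hs : 0 < s) : 2 * log s ≤ s := by
  have h := log_le_sub_one_of_pos (x := s / 2) (by positivity)
  rw [log_div hs.ne' two_ne_zero] at h
  linarith [log_two_lt_d9]

lemma log_add_inv_sqrt_le {x : ℝ} (hx : 4 ≤ x) :
    log x + 1 / √x ≤ x * (exp (1 / √x) - 1) := by
  set s := √x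
  have hs : 2 ≤ s := (le_sqrt (by norm_num) (by linarith)).2 (by linarith)
  have hxs : x = s ^ 2 := (sq_sqrt (by linarith)).symm
  have hexp : s + 1 / 2 ≤ s ^ 2 * (exp (1 / s) - 1) := by
    have := quadratic_le_exp_of_nonneg (x := 1 / s) (by positivity)
    have hexpand : s ^ 2 * (1 / s + (1 / s) ^ 2 / 2) = s + 1 / 2 := by field_simp
    nlinarith
  have hinv : 1 / s ≤ 1 / 2 := one_div_le_one_div_of_le two_pos hs
  rw [hxs, log_pow]
  push_cast
  linarith [two_mul_log_le_self (by linarith : 0 < s)]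

/-- With `Ŵ(x) = x + log x` and `W̄` the inverse of `y ↦ y − log y` on `[1,∞)`,
for `x > 1` one has `Ŵ(x) ≤ W̄(x) ≤ Ŵ(x) + min{1/2, 1/√x}`. -/
theorem lambert_bounds (Wbar : ℝ → ℝ)
    (hW1 : ∀ x : ℝ, 1 ≤ x → 1 ≤ Wbar x)
    (hW2 : ∀ x : ℝ, 1 ≤ x → Wbar x - Real.log (Wbar x) = x)
    (x : ℝ) (hx : 1 < x) :
    x + Real.log x ≤ Wbar x ∧
    Wbar x ≤ x + Real.log x + min (1 / 2) (1 / Real.sqrt x) := by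
  have hy := hW1 x hx.le
  have h := hW2 x hx.le
  refine ⟨add_log_le_of_sub_log_eq (by linarith) hy h, ?_⟩
  have half : Wbar x ≤ x + log x + 1 / 2 :=
    le_add_log_add_of_sub_log_eq hx.le hy h (by norm_num) (log_add_half_le (by linarith))
  have inv_sqrt : Wbar x ≤ x + log x + 1 / √x := by
    rcases le_total 4 x with h4 | h4
    · exact le_add_log_add_of_sub_log_eq hx.le hy h (by positivity) (log_add_inv_sqrt_le h4)
    · have hsqrt : √x ≤ 2 := (sqrt_le_left two_pos.le).2 (by linarith)
      have : 1 / 2 ≤ 1 / √x := one_div_le_one_div_of_le (sqrt_pos.2 (by linarith)) hsqrt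
      linarith
  rw [← min_add_add_left]
  exact le_min half inv_sqrt
end
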